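/- Let n be a positive integer, A₋₁ an invertible n×n complex matrix, A₂, A₃ : [-1,0] → ℂ^{n×n} matrix-valued functions with square-integrable entries, and Δ(λ) the characteristic matrix function. Let c ∈ ℝ be such that c ≠ ln|μ| for every eigenvalue μ of A₋₁. Then there exists ε > 0 such that the set of zeros of det Δ in the vertical strip {λ ∈ ℂ : |Re λ − c| ≤ ε} is finite. -/

import Mathlib

open MeasureTheory Complex Set

/-- The characteristic matrix function `Δ(λ)` of the neutral type system. -/
noncomputable def Delta {n : ℕ} (Am1 : Matrix (Fin n) (Fin n) ℂ)
    (A2 A3 : ℝ → Matrix (Fin n) (Fin n) ℂ) (lam : ℂ) : Matrix (Fin n) (Fin n) ℂ :=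
  (-lam) • (1 : Matrix (Fin n) (Fin n) ℂ)
    + (lam * Complex.exp (-lam)) • Am1
    + lam • Matrix.of (fun i j => ∫ s in Set.Ioc (-1:ℝ) 0, Complex.exp (lam * s) * A2 s i j)
    + Matrix.of (fun i j => ∫ s in Set.Ioc (-1:ℝ) 0, Complex.exp (lam * s) * A3 s i j)

/-!
Divided by `λ`, the characteristic matrix is `e^{-λ} A₋₁ - 1` plus the finite Laplace transform
of `A₂` plus `λ⁻¹` times that of `A₃`. Along zeros in the strip with `|Im λ| → ∞`, after passing
to a subsequence with `Re λ → x` and `e^{-λ} → w`, the Riemann–Lebesgue lemma kills the first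
transform and the factor `λ⁻¹` the second, so `det (w A₋₁ - 1) = 0` with `|w| = e^{-x}`: then
`w⁻¹` is an eigenvalue of `A₋₁` with `log |w⁻¹| = x`, impossible in a thin enough strip around
`c`. Hence the zeros in the strip lie in a compact rectangle, where an entire function that is
not identically zero has only finitely many zeros.
-/

open Filter Topology Metric Bornology

noncomputable def finiteLaplace (a : ℝ → ℂ) (z : ℂ) : ℂ :=
  ∫ s in Ioc (-1:ℝ) 0, cexp (z * s) * a s

theorem abs_le_one_of_mem_Ioc {s : ℝ} (hs : s ∈ Ioc (-1:ℝ) 0) : |s| ≤ 1 :=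
  abs_le.2 ⟨hs.1.le, hs.2.trans zero_le_one⟩

theorem norm_cexp_mul_le {z : ℂ} {s : ℝ} (hs : s ∈ Ioc (-1:ℝ) 0) :
    ‖cexp (z * s)‖ ≤ Real.exp |z.re| := by
  rw [Complex.norm_exp, re_mul_ofReal]
  refine Real.exp_le_exp.2 ((le_abs_self _).trans ?_)
  rw [abs_mul]
  exact mul_le_of_le_one_right (abs_nonneg _) (abs_le_one_of_mem_Ioc hs)

theorem norm_cexp_add_mul_sub_le {z : ℂ} {d s : ℝ} (hd : |d| ≤ 1) (hs : s ∈ Ioc (-1:ℝ) 0) :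
    ‖cexp ((z + d) * s) - cexp (z * s)‖ ≤ Real.exp |z.re| * (2 * |d|) := by
  have hds : ‖(d * s : ℂ)‖ ≤ |d| := by
    rw [norm_mul, Complex.norm_real, Complex.norm_real, Real.norm_eq_abs, Real.norm_eq_abs]
    exact mul_le_of_le_one_right (abs_nonneg d) (abs_le_one_of_mem_Ioc hs)
  calc ‖cexp ((z + d) * s) - cexp (z * s)‖ = ‖cexp (z * s)‖ * ‖cexp (d * s) - 1‖ := by
        rw [← norm_mul, mul_sub, mul_one, ← Complex.exp_add, add_mul]
    _ ≤ Real.exp |z.re| * (2 * |d|) :=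
        mul_le_mul (norm_cexp_mul_le hs) ((norm_exp_sub_one_le (hds.trans hd)).trans (by linarith))
          (norm_nonneg _) (Real.exp_pos _).le

theorem tendsto_finiteLaplace_ofReal_add_mul_I (a : ℝ → ℂ) (x : ℝ) :
    Tendsto (fun t : ℝ => finiteLaplace a (x + t * I)) (cocompact ℝ) (𝓝 0) := by
  have hscale : Tendsto (fun t : ℝ => t * -(2 * Real.pi)⁻¹) (cocompact ℝ) (cocompact ℝ) :=
    tendsto_cocompact_mul_right₀ (by simp [Real.pi_ne_zero])
  refine ((Real.tendsto_integral_exp_smul_cocompact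
    ((Ioc (-1:ℝ) 0).indicator fun s => cexp (x * s) * a s)).comp hscale).congr fun t => ?_
  simp only [Function.comp_apply, finiteLaplace, ← integral_indicator measurableSet_Ioc]
  congr 1
  funext s
  by_cases hs : s ∈ Ioc (-1:ℝ) 0
  · rw [indicator_of_mem hs, indicator_of_mem hs, Circle.smul_def, Real.fourierChar_apply,
      smul_eq_mul, ← mul_assoc, ← Complex.exp_add]
    congr 2
    push_cast
    field_simp
    ring
  · simp [indicator_of_notMem hs]

section finiteLaplace

variable {a : ℝ → ℂ}

theorem integrableOn_cexp_mul (ha : IntegrableOn a (Ioc (-1) 0)) (z : ℂ) :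
    IntegrableOn (fun s : ℝ => cexp (z * s) * a s) (Ioc (-1) 0) := by
  refine ha.bdd_mul (c := Real.exp |z.re|) (by fun_prop) ?_
  filter_upwards [ae_restrict_mem measurableSet_Ioc] with s hs
  exact norm_cexp_mul_le hs

theorem norm_finiteLaplace_le (ha : IntegrableOn a (Ioc (-1) 0)) (z : ℂ) :
    ‖finiteLaplace a z‖ ≤ Real.exp |z.re| * ∫ s in Ioc (-1:ℝ) 0, ‖a s‖ := by
  rw [← integral_const_mul]
  refine norm_integral_le_of_norm_le (ha.norm.const_mul _) ?_
  filter_upwards [ae_restrict_mem measurableSet_Ioc] with s hs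
  rw [norm_mul]
  exact mul_le_mul_of_nonneg_right (norm_cexp_mul_le hs) (norm_nonneg _)

theorem norm_finiteLaplace_add_sub_le (ha : IntegrableOn a (Ioc (-1) 0)) (z : ℂ) {d : ℝ}
    (hd : |d| ≤ 1) :
    ‖finiteLaplace a (z + d) - finiteLaplace a z‖
      ≤ Real.exp |z.re| * (2 * |d|) * ∫ s in Ioc (-1:ℝ) 0, ‖a s‖ := by
  rw [finiteLaplace, finiteLaplace, ← integral_sub (integrableOn_cexp_mul ha _)
    (integrableOn_cexp_mul ha _), ← integral_const_mul]
  refine norm_integral_le_of_norm_le (ha.norm.const_mul _) ?_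
  filter_upwards [ae_restrict_mem measurableSet_Ioc] with s hs
  rw [← sub_mul, norm_mul]
  exact mul_le_mul_of_nonneg_right (norm_cexp_add_mul_sub_le hd hs) (norm_nonneg _)

theorem differentiable_finiteLaplace (ha : IntegrableOn a (Ioc (-1) 0)) :
    Differentiable ℂ (finiteLaplace a) := by
  intro z₀
  refine (hasDerivAt_integral_of_dominated_loc_of_deriv_le
    (F' := fun z (s : ℝ) => s * cexp (z * s) * a s)
    (bound := fun s => Real.exp (‖z₀‖ + 1) * ‖a s‖) (ball_mem_nhds z₀ one_pos)
    (.of_forall fun z => (integrableOn_cexp_mul ha z).aestronglyMeasurable)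
    (integrableOn_cexp_mul ha z₀)
    ((by fun_prop : Continuous fun s : ℝ => (s : ℂ) * cexp (z₀ * s)).aestronglyMeasurable.mul ha.1)
    ?_ (ha.norm.const_mul _) ?_).2.differentiableAt
  · filter_upwards [ae_restrict_mem measurableSet_Ioc] with s hs z hz
    have hre : |z.re| ≤ ‖z₀‖ + 1 := by
      have := norm_le_norm_add_norm_sub' z z₀
      linarith [abs_re_le_norm z, mem_ball_iff_norm.1 hz]
    rw [norm_mul, norm_mul, Complex.norm_real, Real.norm_eq_abs]
    refine mul_le_mul_of_nonneg_right ?_ (norm_nonneg _)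
    calc |s| * ‖cexp (z * s)‖ ≤ 1 * Real.exp (‖z₀‖ + 1) :=
          mul_le_mul (abs_le_one_of_mem_Ioc hs)
            ((norm_cexp_mul_le hs).trans (Real.exp_le_exp.2 hre)) (norm_nonneg _) zero_le_one
      _ = Real.exp (‖z₀‖ + 1) := one_mul _
  · refine .of_forall fun s z _ => ?_
    have := ((hasDerivAt_mul_const (s : ℂ)).cexp (x := z)).mul_const (a s)
    exact this.congr_deriv (by ring)

theorem tendsto_finiteLaplace_zero (ha : IntegrableOn a (Ioc (-1) 0)) {ι : Type*} {l : Filter ι}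
    {u : ι → ℂ} {x : ℝ} (hre : Tendsto (fun i => (u i).re) l (𝓝 x))
    (him : Tendsto (fun i => (u i).im) l (cocompact ℝ)) :
    Tendsto (fun i => finiteLaplace a (u i)) l (𝓝 0) := by
  set v : ι → ℂ := fun i => x + (u i).im * I
  set d : ι → ℝ := fun i => (u i).re - x
  have hu : ∀ i, u i = v i + d i := fun i => by apply Complex.ext <;> simp [v, d]
  have hd : Tendsto (fun i => |d i|) l (𝓝 0) := by
    simpa [d] using (hre.sub_const x).abs
  have hdiff : Tendsto (fun i => finiteLaplace a (v i + d i) - finiteLaplace a (v i)) l (𝓝 0) := by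
    have hbound := ((hd.const_mul 2).const_mul (Real.exp |x|)).mul_const
      (∫ s in Ioc (-1:ℝ) 0, ‖a s‖)
    rw [mul_zero, mul_zero, zero_mul] at hbound
    refine squeeze_zero_norm' ?_ hbound
    filter_upwards [hd.eventually_le_const one_pos] with i hi
    simpa [v] using norm_finiteLaplace_add_sub_le ha (v i) hi
  have hsum := ((tendsto_finiteLaplace_ofReal_add_mul_I a x).comp him).add hdiff
  rw [add_zero] at hsum
  refine hsum.congr fun i => ?_
  simp only [Function.comp_apply, ← hu]
  exact add_sub_cancel _ _

end finiteLaplace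

theorem Differentiable.matrix_det {𝕜 ι : Type*} [NontriviallyNormedField 𝕜] [Fintype ι]
    [DecidableEq ι] {M : 𝕜 → Matrix ι ι 𝕜} (hM : ∀ i j, Differentiable 𝕜 fun z => M z i j) :
    Differentiable 𝕜 fun z => (M z).det := by
  simp only [Matrix.det_apply, Units.smul_def, zsmul_eq_mul]
  exact Differentiable.fun_sum fun σ _ =>
    (Differentiable.fun_finsetProd fun i _ => hM (σ i) i).const_mul _

theorem Differentiable.finite_inter_preimage_zero {f : ℂ → ℂ} (hf : Differentiable ℂ f)
    {z₀ : ℂ} (hz₀ : f z₀ ≠ 0) {K : Set ℂ} (hK : IsCompact K) : (K ∩ f ⁻¹' {0}).Finite := by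
  have hcod := AnalyticOnNhd.preimage_zero_mem_codiscrete (fun z _ => hf.analyticAt z) hz₀
  simpa [sdiff_eq] using hK.finite_sdiff_of_mem_codiscreteWithin
    (codiscreteWithin_mono (subset_univ K) hcod)

theorem Matrix.det_smul_sub_one_ne_zero {𝕜 ι : Type*} [Field 𝕜] [Fintype ι] [DecidableEq ι]
    {A : Matrix ι ι 𝕜} {w : 𝕜} (hw : w ≠ 0) (hA : w⁻¹ ∉ spectrum 𝕜 A) :
    (w • A - 1).det ≠ 0 := by
  have hunit := (Matrix.isUnit_iff_isUnit_det _).1 (spectrum.notMem_iff.1 hA)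
  have hfactor : w • A - 1 = (-w) • (algebraMap 𝕜 (Matrix ι ι 𝕜) w⁻¹ - A) := by
    rw [Algebra.algebraMap_eq_smul_one, smul_sub, smul_smul, neg_mul, mul_inv_cancel₀ hw,
      neg_smul, one_smul, neg_smul, sub_neg_eq_add, neg_add_eq_sub]
  rw [hfactor, Matrix.det_smul]
  exact mul_ne_zero (pow_ne_zero _ (neg_ne_zero.2 hw)) hunit.ne_zero

theorem Matrix.exists_pos_log_norm_spectrum_notMem_closedBall {ι : Type*} [Fintype ι]
    [DecidableEq ι] {A : Matrix ι ι ℂ} {c : ℝ} (hc : ∀ μ ∈ spectrum ℂ A, c ≠ Real.log ‖μ‖) :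
    ∃ ε > 0, ∀ μ ∈ spectrum ℂ A, Real.log ‖μ‖ ∉ closedBall c ε := by
  have hfin := A.finite_spectrum.image fun μ => Real.log ‖μ‖
  have hc' : c ∈ ((fun μ => Real.log ‖μ‖) '' spectrum ℂ A)ᶜ := by
    rintro ⟨μ, hμ, hcμ⟩
    exact hc μ hμ hcμ.symm
  obtain ⟨ε, hε, hball⟩ :=
    nhds_basis_closedBall.mem_iff.1 (hfin.isClosed.isOpen_compl.mem_nhds hc')
  exact ⟨ε, hε, fun μ hμ h => hball h ⟨μ, hμ, rfl⟩⟩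

section Delta

variable {n : ℕ} (Am1 : Matrix (Fin n) (Fin n) ℂ) {A2 A3 : ℝ → Matrix (Fin n) (Fin n) ℂ}

theorem Delta_apply (z : ℂ) (i j : Fin n) :
    Delta Am1 A2 A3 z i j = -z * (1 : Matrix (Fin n) (Fin n) ℂ) i j + z * cexp (-z) * Am1 i j
      + z * finiteLaplace (fun s => A2 s i j) z + finiteLaplace (fun s => A3 s i j) z := by
  simp [Delta, finiteLaplace]

theorem inv_mul_Delta_apply {z : ℂ} (hz : z ≠ 0) (i j : Fin n) :
    z⁻¹ * Delta Am1 A2 A3 z i j = cexp (-z) * Am1 i j - (1 : Matrix (Fin n) (Fin n) ℂ) i j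
      + finiteLaplace (fun s => A2 s i j) z + z⁻¹ * finiteLaplace (fun s => A3 s i j) z := by
  rw [Delta_apply]
  field_simp
  ring

variable (hA2 : ∀ i j, IntegrableOn (fun s => A2 s i j) (Ioc (-1) 0))
  (hA3 : ∀ i j, IntegrableOn (fun s => A3 s i j) (Ioc (-1) 0))
include hA2 hA3

theorem differentiable_det_Delta : Differentiable ℂ fun z => (Delta Am1 A2 A3 z).det := by
  refine Differentiable.matrix_det fun i j => ?_
  simp only [Delta_apply]
  have := differentiable_finiteLaplace (hA2 i j)
  have := differentiable_finiteLaplace (hA3 i j)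
  fun_prop

theorem tendsto_inv_smul_Delta {ι : Type*} {l : Filter ι} {u : ι → ℂ} {x : ℝ} {w : ℂ}
    (hre : Tendsto (fun k => (u k).re) l (𝓝 x))
    (him : Tendsto (fun k => (u k).im) l (cocompact ℝ))
    (hexp : Tendsto (fun k => cexp (-u k)) l (𝓝 w)) :
    Tendsto (fun k => (u k)⁻¹ • Delta Am1 A2 A3 (u k)) l (𝓝 (w • Am1 - 1)) := by
  have hcob : Tendsto u l (cobounded ℂ) := by
    rw [← cobounded_eq_cocompact, ← tendsto_norm_atTop_iff_cobounded] at him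
    exact tendsto_norm_atTop_iff_cobounded.1
      (tendsto_atTop_mono (fun k => abs_im_le_norm (u k)) him)
  have hne : ∀ᶠ k in l, u k ≠ 0 :=
    ((tendsto_norm_atTop_iff_cobounded.2 hcob).eventually_gt_atTop 0).mono
      fun k hk => norm_pos_iff.1 hk
  refine tendsto_pi_nhds.2 fun i => tendsto_pi_nhds.2 fun j => ?_
  have hbdd : IsBoundedUnder (· ≤ ·) l fun k => ‖finiteLaplace (fun s => A3 s i j) (u k)‖ :=
    (((Real.continuous_exp.tendsto _).comp hre.abs).mul_const _).isBoundedUnder_le.mono_le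
      (.of_forall fun k => norm_finiteLaplace_le (hA3 i j) (u k))
  have hlim := ((((hexp.mul_const (Am1 i j)).sub_const ((1 : Matrix (Fin n) (Fin n) ℂ) i j)).add
    (tendsto_finiteLaplace_zero (hA2 i j) hre him)).add
    ((tendsto_inv₀_cobounded.comp hcob).zero_mul_isBoundedUnder_le hbdd))
  rw [add_zero, add_zero] at hlim
  refine hlim.congr' ?_
  filter_upwards [hne] with k hk
  simp [inv_mul_Delta_apply Am1 hk]

theorem det_smul_sub_one_eq_zero_of_tendsto {ι : Type*} {l : Filter ι} [l.NeBot] {u : ι → ℂ}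
    {x : ℝ} {w : ℂ} (hre : Tendsto (fun k => (u k).re) l (𝓝 x))
    (him : Tendsto (fun k => (u k).im) l (cocompact ℝ))
    (hexp : Tendsto (fun k => cexp (-u k)) l (𝓝 w))
    (hzero : ∀ᶠ k in l, (Delta Am1 A2 A3 (u k)).det = 0) :
    (w • Am1 - 1).det = 0 := by
  refine tendsto_nhds_unique ((continuous_id.matrix_det.tendsto _).comp
    (tendsto_inv_smul_Delta Am1 hA2 hA3 hre him hexp)) (tendsto_const_nhds.congr' ?_)
  filter_upwards [hzero] with k hk
  simp [hk]

theorem exists_forall_abs_im_lt_of_det_Delta_eq_zero {S : Set ℝ} (hS : IsCompact S)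
    (hσ : ∀ μ ∈ spectrum ℂ Am1, Real.log ‖μ‖ ∉ S) :
    ∃ T : ℝ, ∀ z : ℂ, z.re ∈ S → (Delta Am1 A2 A3 z).det = 0 → |z.im| < T := by
  by_contra! h
  choose u hre hdet him using fun k : ℕ => h k
  obtain ⟨M, hM⟩ := hS.isBounded.exists_norm_le
  have hmem : ∀ k, ((u k).re, cexp (-u k)) ∈ S ×ˢ closedBall (0 : ℂ) (Real.exp M) :=
    fun k => ⟨hre k, by
      rw [mem_closedBall_zero_iff, Complex.norm_exp, neg_re]
      exact Real.exp_le_exp.2 ((neg_le_abs _).trans (hM _ (hre k)))⟩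
  obtain ⟨⟨x, w⟩, ⟨hx, -⟩, φ, hφ, hlim⟩ :=
    (hS.prod (isCompact_closedBall _ _)).tendsto_subseq hmem
  have hre' : Tendsto (fun k => (u (φ k)).re) atTop (𝓝 x) := (continuous_fst.tendsto _).comp hlim
  have hexp' : Tendsto (fun k => cexp (-u (φ k))) atTop (𝓝 w) :=
    (continuous_snd.tendsto _).comp hlim
  have him' : Tendsto (fun k => (u (φ k)).im) atTop (cocompact ℝ) := by
    rw [← cobounded_eq_cocompact, ← tendsto_norm_atTop_iff_cobounded]
    exact tendsto_atTop_mono (fun k => (Nat.cast_le.2 (hφ.id_le k)).trans (him (φ k)))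
      tendsto_natCast_atTop_atTop
  have hw : ‖w‖ = Real.exp (-x) := tendsto_nhds_unique hexp'.norm
    (by simpa [Complex.norm_exp] using hre'.neg.rexp)
  have hw0 : w ≠ 0 := norm_ne_zero_iff.1 (hw ▸ (Real.exp_pos _).ne')
  refine Matrix.det_smul_sub_one_ne_zero hw0 (fun hμ => hσ _ hμ ?_)
    (det_smul_sub_one_eq_zero_of_tendsto Am1 hA2 hA3 hre' him' hexp'
      (.of_forall fun k => hdet (φ k)))
  rwa [norm_inv, hw, Real.log_inv, Real.log_exp, neg_neg]

end Delta

theorem finitely_many_zeros_in_strip_general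
    (n : ℕ) (Am1 : Matrix (Fin n) (Fin n) ℂ)
    (A2 A3 : ℝ → Matrix (Fin n) (Fin n) ℂ)
    (hA2 : ∀ i j, MeasureTheory.MemLp (fun θ => A2 θ i j) 2
      (volume.restrict (Set.Ioc (-1:ℝ) 0)))
    (hA3 : ∀ i j, MeasureTheory.MemLp (fun θ => A3 θ i j) 2
      (volume.restrict (Set.Ioc (-1:ℝ) 0)))
    (c : ℝ) (hc : ∀ μ ∈ spectrum ℂ Am1, c ≠ Real.log ‖μ‖) :
    ∃ ε : ℝ, 0 < ε ∧
      {lam : ℂ | (Delta Am1 A2 A3 lam).det = 0 ∧ |lam.re - c| ≤ ε}.Finite := by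
  have h2 : ∀ i j, IntegrableOn (fun s => A2 s i j) (Ioc (-1) 0) :=
    fun i j => (hA2 i j).integrable one_le_two
  have h3 : ∀ i j, IntegrableOn (fun s => A3 s i j) (Ioc (-1) 0) :=
    fun i j => (hA3 i j).integrable one_le_two
  obtain ⟨ε, hε, hσ⟩ := Matrix.exists_pos_log_norm_spectrum_notMem_closedBall hc
  obtain ⟨T, hT⟩ :=
    exists_forall_abs_im_lt_of_det_Delta_eq_zero Am1 h2 h3 (isCompact_closedBall c ε) hσ
  have hz₀ : (Delta Am1 A2 A3 (c + T * I)).det ≠ 0 := fun h =>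
    (hT _ (by simpa using hε.le) h).not_ge (by simpa using le_abs_self T)
  refine ⟨ε, hε, ((differentiable_det_Delta Am1 h2 h3).finite_inter_preimage_zero hz₀
    ((isCompact_closedBall c ε).reProdIm (isCompact_closedBall 0 T))).subset ?_⟩
  rintro z ⟨hz, hre⟩
  have hre' : z.re ∈ closedBall c ε := by rwa [mem_closedBall, Real.dist_eq]
  refine ⟨⟨hre', ?_⟩, hz⟩
  rw [mem_preimage, mem_closedBall_zero_iff, Real.norm_eq_abs]
  exact (hT z hre' hz).le

theorem finitely_many_zeros_in_strip
    (n : ℕ) (hn : 0 < n) (Am1 : Matrix (Fin n) (Fin n) ℂ)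
    (hinv : IsUnit Am1)
    (A2 A3 : ℝ → Matrix (Fin n) (Fin n) ℂ)
    (hA2 : ∀ i j, MeasureTheory.MemLp (fun θ => A2 θ i j) 2
      (volume.restrict (Set.Ioc (-1:ℝ) 0)))
    (hA3 : ∀ i j, MeasureTheory.MemLp (fun θ => A3 θ i j) 2
      (volume.restrict (Set.Ioc (-1:ℝ) 0)))
    (c : ℝ) (hc : ∀ μ ∈ spectrum ℂ Am1, c ≠ Real.log ‖μ‖) :
    ∃ ε : ℝ, 0 < ε ∧
      {lam : ℂ | (Delta Am1 A2 A3 lam).det = 0 ∧ |lam.re - c| ≤ ε}.Finite :=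
  finitely_many_zeros_in_strip_general n Am1 A2 A3 hA2 hA3 c hc
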